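/- Let G be a connected threshold graph with binary string b = 0^{s_1} 1^{t_1} ... 0^{s_k} 1^{t_k}. If s_1 = 1, then the anti-regular graph A_{2k} is isomorphic to an induced subgraph of G; if s_1 ≥ 2, then A_{2k+1} is isomorphic to an induced subgraph of G. -/

import Mathlib

/-!
Adjacency in a threshold graph between two vertices depends only on their relative order and on
the bit of the later one, so keeping the vertices at the positions of a subsequence `b'` of `b`
embeds `G(b')` into `G(b)` as an induced subgraph. Every block `0^{s_i} 1^{t_i}` contains the
subsequence `01`, and the first block contains `001` when `s_1 ≥ 2`; hence the strings `(01)^k` of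
`A_{2k}` and `0(01)^k` of `A_{2k+1}` are subsequences of `b`.
-/

open scoped Classical

noncomputable section

/-- Threshold graph built from a binary string `b` (indexed by `Fin n`, first bit should be 0):
vertex `j` is joined to all earlier vertices iff `b j = true`. -/
def thresholdGraph {n : ℕ} (b : Fin n → Bool) : SimpleGraph (Fin n) where
  Adj i j := (i < j ∧ b j = true) ∨ (j < i ∧ b i = true)
  symm := ⟨by intro i j h; tauto⟩
  loopless := ⟨by intro i h; rcases h with ⟨h, -⟩ | ⟨h, -⟩ <;> exact absurd h (lt_irrefl i)⟩

/-- Threshold graph of a binary string given as a list. -/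
def thresholdGraphL (b : List Bool) : SimpleGraph (Fin b.length) :=
  thresholdGraph (fun i => b.get i)

/-- The binary string `0^{s_1}1^{t_1} ⋯ 0^{s_k}1^{t_k}`. -/
def runList {k : ℕ} (s t : Fin k → ℕ) : List Bool :=
  (List.ofFn fun i => List.replicate (s i) false ++ List.replicate (t i) true).flatten

/-- The connected anti-regular graph on `m` vertices, i.e. the threshold graph with the
alternating string `0101⋯01` (`m` even) or `00101⋯01` (`m` odd). -/
def antiRegular (m : ℕ) : SimpleGraph (Fin m) :=
  thresholdGraph (fun i =>
    if m % 2 = 0 then decide ((i : ℕ) % 2 = 1)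
    else decide (2 ≤ (i : ℕ) ∧ (i : ℕ) % 2 = 0))

/-- The (0,1)-adjacency matrix of a graph, over `ℝ`. -/
def adjMat {V : Type} [Fintype V] [DecidableEq V] (G : SimpleGraph V) : Matrix V V ℝ :=
  Matrix.of fun i j => if G.Adj i j then 1 else 0

/-- `μ` is an eigenvalue of the matrix `A`. -/
def IsEigenvalue {V : Type} [Fintype V] [DecidableEq V] (A : Matrix V V ℝ) (μ : ℝ) : Prop :=
  ∃ x : V → ℝ, x ≠ 0 ∧ A.mulVec x = μ • x

/-- The (geometric) multiplicity of `μ` as an eigenvalue of `A`. -/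
def eigMult {V : Type} [Fintype V] [DecidableEq V] (A : Matrix V V ℝ) (μ : ℝ) : ℕ :=
  Module.finrank ℝ (LinearMap.ker (A.mulVecLin - μ • LinearMap.id))

/-- `μ = μ⁻(A)`: the largest eigenvalue of `A` that is strictly less than `-1`. -/
def IsMuMinus {V : Type} [Fintype V] [DecidableEq V] (A : Matrix V V ℝ) (μ : ℝ) : Prop :=
  IsEigenvalue A μ ∧ μ < -1 ∧ ∀ x, IsEigenvalue A x → x < -1 → x ≤ μ

/-- `μ = μ⁺(A)`: the smallest strictly positive eigenvalue of `A`. -/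
def IsMuPlus {V : Type} [Fintype V] [DecidableEq V] (A : Matrix V V ℝ) (μ : ℝ) : Prop :=
  IsEigenvalue A μ ∧ 0 < μ ∧ ∀ x, IsEigenvalue A x → 0 < x → μ ≤ x

/-- `μ = λ_max(A)`: the largest eigenvalue of `A`. -/
def IsMaxEig {V : Type} [Fintype V] [DecidableEq V] (A : Matrix V V ℝ) (μ : ℝ) : Prop :=
  IsEigenvalue A μ ∧ ∀ x, IsEigenvalue A x → x ≤ μ

/-- `μ = λ_min(A)`: the smallest eigenvalue of `A`. -/
def IsMinEig {V : Type} [Fintype V] [DecidableEq V] (A : Matrix V V ℝ) (μ : ℝ) : Prop :=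
  IsEigenvalue A μ ∧ ∀ x, IsEigenvalue A x → μ ≤ x

theorem thresholdGraph_nonempty_embedding_of_sublist {m n : ℕ} {b' : Fin m → Bool}
    {b : Fin n → Bool} (h : (List.ofFn b').Sublist (List.ofFn b)) :
    Nonempty (thresholdGraph b' ↪g thresholdGraph b) := by
  obtain ⟨f, hf⟩ := List.sublist_iff_exists_fin_orderEmbedding_get_eq.mp h
  let g : Fin m ↪o Fin n :=
    (Fin.castOrderIso List.length_ofFn).symm.toOrderEmbedding.trans
      (f.trans (Fin.castOrderIso List.length_ofFn).toOrderEmbedding)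
  have hg : ∀ i, b (g i) = b' i := fun i => by
    simpa [g, Fin.cast] using (hf (Fin.cast List.length_ofFn.symm i)).symm
  refine ⟨⟨g.toEmbedding, fun {i j} => ?_⟩⟩
  change (g i < g j ∧ b (g j) = true ∨ g j < g i ∧ b (g i) = true) ↔ _
  rw [hg, hg, g.lt_iff_lt, g.lt_iff_lt]
  rfl

def alternatingList (k : ℕ) : List Bool := (List.replicate k [false, true]).flatten

theorem ofFn_mod_two_eq_alternatingList (k : ℕ) :
    List.ofFn (fun i : Fin (2 * k) => decide ((i : ℕ) % 2 = 1)) = alternatingList k := by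
  rw [List.ofFn_mul', alternatingList, ← List.ofFn_const]
  congr 1 with i
  simp [List.ofFn_succ]

theorem ofFn_odd_eq_false_cons_alternatingList (k : ℕ) :
    List.ofFn (fun i : Fin (2 * k + 1) => decide (2 ≤ (i : ℕ) ∧ (i : ℕ) % 2 = 0)) =
      false :: alternatingList k := by
  rw [List.ofFn_succ, ← ofFn_mod_two_eq_alternatingList]
  congr 2 with i
  simp only [Fin.val_succ, decide_eq_decide]
  omega

theorem antiRegular_two_mul (k : ℕ) :
    antiRegular (2 * k) = thresholdGraph fun i => decide ((i : ℕ) % 2 = 1) := by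
  simp [antiRegular]

theorem antiRegular_two_mul_add_one (k : ℕ) :
    antiRegular (2 * k + 1) =
      thresholdGraph fun i => decide (2 ≤ (i : ℕ) ∧ (i : ℕ) % 2 = 0) := by
  simp [antiRegular, Nat.add_mod]

theorem runList_succ {k : ℕ} (s t : Fin (k + 1) → ℕ) :
    runList s t = (List.replicate (s 0) false ++ List.replicate (t 0) true) ++
      runList (fun i => s i.succ) (fun i => t i.succ) := by
  simp [runList, List.ofFn_succ]

theorem alternatingList_sublist_runList {k : ℕ} {s t : Fin k → ℕ} (hs : ∀ i, 1 ≤ s i)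
    (ht : ∀ i, 1 ≤ t i) : (alternatingList k).Sublist (runList s t) := by
  induction k with
  | zero => simp [alternatingList]
  | succ k ih =>
    rw [runList_succ]
    exact (((List.replicate_sublist_replicate false).mpr (hs 0)).append
      ((List.replicate_sublist_replicate true).mpr (ht 0))).append
      (ih (fun i => hs i.succ) (fun i => ht i.succ))

theorem false_cons_alternatingList_sublist_runList {k : ℕ} {s t : Fin (k + 1) → ℕ}
    (hs0 : 2 ≤ s 0) (hs : ∀ i, 1 ≤ s i) (ht : ∀ i, 1 ≤ t i) :
    (false :: alternatingList (k + 1)).Sublist (runList s t) := by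
  rw [runList_succ]
  exact (((List.replicate_sublist_replicate false).mpr hs0).append
      ((List.replicate_sublist_replicate true).mpr (ht 0))).append
      (alternatingList_sublist_runList (fun i => hs i.succ) (fun i => ht i.succ))

/-- the largest anti-regular induced subgraph of a connected threshold graph
with string `0^{s_1}1^{t_1}⋯0^{s_k}1^{t_k}` is `A_{2k}` if `s_1 = 1` and `A_{2k+1}`
if `s_1 ≥ 2`. -/
theorem largest_antiregular_subgraph {k : ℕ} (hk : 0 < k) (s t : Fin k → ℕ)
    (hs : ∀ i, 1 ≤ s i) (ht : ∀ i, 1 ≤ t i) :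
    (s ⟨0, hk⟩ = 1 → Nonempty (antiRegular (2 * k) ↪g thresholdGraphL (runList s t))) ∧
    (2 ≤ s ⟨0, hk⟩ → Nonempty (antiRegular (2 * k + 1) ↪g thresholdGraphL (runList s t))) := by
  obtain ⟨k, rfl⟩ := Nat.exists_eq_add_one_of_ne_zero hk.ne'
  refine ⟨fun _ => ?_, fun hs0 => ?_⟩
  · rw [antiRegular_two_mul]
    apply thresholdGraph_nonempty_embedding_of_sublist
    rw [ofFn_mod_two_eq_alternatingList, List.ofFn_get]
    exact alternatingList_sublist_runList hs ht
  · rw [antiRegular_two_mul_add_one]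
    apply thresholdGraph_nonempty_embedding_of_sublist
    rw [ofFn_odd_eq_false_cons_alternatingList, List.ofFn_get]
    exact false_cons_alternatingList_sublist_runList hs0 hs ht
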